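/- arXiv:1712.00637 — 7 statements merged into one kernel-verified Lean document; each statement's English description precedes it below -/
import Mathlib

section
/- For every ρ ∈ M₃(ℂ), one has Trace(ρ·𝓛(x)) = 0 for all x ∈ M₃(ℂ) if and only if ρ lies in the complex linear span of E₁₁ and E₂₂. (In other words, the invariant functionals of the quantum Markov semigroup generated by 𝓛 are exactly those of the form a·E₁₁ + b·E₂₂ with a, b ∈ ℂ.) -/
/-!
Moving `𝓛` across the trace gives `Tr(ρ 𝓛(x)) = Tr(𝓛_*(ρ) x)` with the predual
`𝓛_*(ρ) = iω(ρE₁₁ − E₁₁ρ) − ½(ρE₃₃ + E₃₃ρ) + E₂₃ρE₃₂`; as the trace pairing is nondegenerate,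
`ρ` is invariant iff `𝓛_*(ρ) = 0`. Entrywise, `𝓛_*` multiplies each off-diagonal entry of `ρ` by one
of `±iω`, `±iω − ½`, `−½` (all nonzero since `ω ≠ 0`) and `ρ₃₃` by `−1`, while the jump term
only adds `ρ₃₃` at `(2,2)`. So `𝓛_*(ρ) = 0` forces every entry but `ρ₁₁`, `ρ₂₂` to vanish.
-/

open Matrix

noncomputable section

/-- The standard matrix units `E i j` of `M₃(ℂ)` (with indices `0,1,2` for `1,2,3`). -/
def E (i j : Fin 3) : Matrix (Fin 3) (Fin 3) ℂ := Matrix.single i j 1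

/-- The GKSL generator `𝓛(x) = iω[E₁₁,x] − ½(E₃₃x − 2E₃₂xE₂₃ + xE₃₃)`. -/
def gen (ω : ℝ) (x : Matrix (Fin 3) (Fin 3) ℂ) : Matrix (Fin 3) (Fin 3) ℂ :=
  (Complex.I * (ω : ℂ)) • (E 0 0 * x - x * E 0 0)
    - (1 / 2 : ℂ) • (E 2 2 * x - 2 • (E 2 1 * x * E 1 2) + x * E 2 2)

section TraceDuality

variable {n R : Type*} [Fintype n] [CommRing R]

theorem trace_mul_mul_right_cycle (ρ x A : Matrix n n R) :
    (ρ * (x * A)).trace = (A * ρ * x).trace := by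
  rw [trace_mul_cycle', Matrix.mul_assoc]

theorem trace_mul_sandwich (ρ A B x : Matrix n n R) :
    (ρ * (A * x * B)).trace = (B * ρ * A * x).trace := by
  rw [← Matrix.mul_assoc, ← Matrix.mul_assoc, trace_mul_comm, ← Matrix.mul_assoc,
    ← Matrix.mul_assoc]

theorem forall_trace_mul_eq_zero_iff {σ : Matrix n n R} :
    (∀ x : Matrix n n R, (σ * x).trace = 0) ↔ σ = 0 := by
  simp [ext_iff_trace_mul_right (B := 0)]

end TraceDuality

def genPredual (ω : ℝ) (ρ : Matrix (Fin 3) (Fin 3) ℂ) : Matrix (Fin 3) (Fin 3) ℂ :=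
  (Complex.I * ω) • (ρ * E 0 0 - E 0 0 * ρ) - (1 / 2 : ℂ) • (ρ * E 2 2 + E 2 2 * ρ)
    + E 1 2 * ρ * E 2 1

theorem trace_mul_gen (ω : ℝ) (ρ x : Matrix (Fin 3) (Fin 3) ℂ) :
    (ρ * gen ω x).trace = (genPredual ω ρ * x).trace := by
  simp only [gen, Matrix.mul_sub, Matrix.mul_add, Matrix.mul_smul, trace_sub, trace_add, trace_smul]
  rw [trace_mul_sandwich ρ (E 2 1) (E 1 2), trace_mul_mul_right_cycle ρ x (E 0 0),
    trace_mul_mul_right_cycle ρ x (E 2 2), ← Matrix.mul_assoc ρ (E 0 0),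
    ← Matrix.mul_assoc ρ (E 2 2)]
  simp only [genPredual, Matrix.sub_mul, Matrix.add_mul, Matrix.smul_mul, trace_sub, trace_add,
    trace_smul, smul_eq_mul, nsmul_eq_mul]
  ring

theorem genPredual_eq (ω : ℝ) (ρ : Matrix (Fin 3) (Fin 3) ℂ) :
    genPredual ω ρ = !![0, -(Complex.I * ω) * ρ 0 1, (-(Complex.I * ω) - 1 / 2) * ρ 0 2;
      Complex.I * ω * ρ 1 0, ρ 2 2, -(1 / 2) * ρ 1 2;
      (Complex.I * ω - 1 / 2) * ρ 2 0, -(1 / 2) * ρ 2 1, -ρ 2 2] := by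
  ext i j
  fin_cases i <;> fin_cases j <;> simp [genPredual, E, mul_apply, single] <;> ring

theorem exists_eq_smul_E_add_smul_E_iff (ρ : Matrix (Fin 3) (Fin 3) ℂ) :
    (∃ a b : ℂ, ρ = a • E 0 0 + b • E 1 1) ↔
      ρ 0 1 = 0 ∧ ρ 0 2 = 0 ∧ ρ 1 0 = 0 ∧ ρ 1 2 = 0 ∧ ρ 2 0 = 0 ∧ ρ 2 1 = 0 ∧ ρ 2 2 = 0 := by
  constructor
  · rintro ⟨a, b, rfl⟩
    simp [E, single]
  · rintro ⟨h01, h02, h10, h12, h20, h21, h22⟩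
    refine ⟨ρ 0 0, ρ 1 1, ?_⟩
    ext i j
    fin_cases i <;> fin_cases j <;> simp [E, single, *]

theorem genPredual_eq_zero_iff {ω : ℝ} (hω : ω ≠ 0) (ρ : Matrix (Fin 3) (Fin 3) ℂ) :
    genPredual ω ρ = 0 ↔ ∃ a b : ℂ, ρ = a • E 0 0 + b • E 1 1 := by
  have h₁ : -(Complex.I * ω) - 2⁻¹ ≠ 0 := fun h => by simpa using congrArg Complex.re h
  have h₂ : Complex.I * ω - 2⁻¹ ≠ 0 := fun h => by simpa using congrArg Complex.re h
  rw [genPredual_eq, exists_eq_smul_E_add_smul_E_iff, ← Matrix.ext_iff]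
  simp only [Fin.isValue, neg_mul, one_div, of_apply, cons_val', cons_val_fin_one,
    Matrix.zero_apply, Fin.forall_fin_succ, cons_val_zero, cons_val_succ, forall_const,
    neg_eq_zero, mul_eq_zero, Complex.I_ne_zero, Complex.ofReal_eq_zero, hω, or_self, false_or,
    h₁, h₂, true_and, inv_eq_zero, OfNat.ofNat_ne_zero]
  tauto

theorem invariant_functionals_iff (ω : ℝ) (hω : ω ≠ 0) (ρ : Matrix (Fin 3) (Fin 3) ℂ) :
    (∀ x : Matrix (Fin 3) (Fin 3) ℂ, (ρ * gen ω x).trace = 0) ↔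
      ∃ a b : ℂ, ρ = a • E 0 0 + b • E 1 1 := by
  simpa only [trace_mul_gen, forall_trace_mul_eq_zero_iff] using genPredual_eq_zero_iff hω ρ

end
end

section
/- If ρ ∈ M₃(ℂ) is positive semidefinite with Trace ρ = 1 and Trace(ρ·𝓛(x)) = 0 for all x ∈ M₃(ℂ), then ρ·e₃ = 0, where e₃ is the third standard basis vector of ℂ³; in particular ρ is not positive definite, so the semigroup generated by 𝓛 has no faithful invariant state. -/
open Matrix
open scoped ComplexOrder

noncomputable section

/-!
Testing invariance against `x = E₂₂` suffices: `𝓛(E₂₂) = E₃₃`, so `ρ₃₃ = tr(ρ E₃₃) = 0`, and a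
positive semidefinite matrix with a vanishing diagonal entry annihilates that basis vector.
-/

theorem Matrix.PosSemidef.mulVec_single_eq_zero {n 𝕜 : Type*} [Fintype n] [DecidableEq n]
    [RCLike 𝕜] {A : Matrix n n 𝕜} (hA : A.PosSemidef) {i : n} (hi : A i i = 0) :
    A *ᵥ Pi.single i 1 = 0 :=
  (hA.dotProduct_mulVec_zero_iff _).mp (by simp [hi])

theorem Matrix.PosDef.mulVec_ne_zero {n 𝕜 : Type*} [Fintype n] [RCLike 𝕜]
    {A : Matrix n n 𝕜} (hA : A.PosDef) {x : n → 𝕜} (hx : x ≠ 0) : A *ᵥ x ≠ 0 := fun h =>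
  (hA.dotProduct_mulVec_pos hx).ne' (by rw [h, dotProduct_zero])

theorem gen_E_one_one (ω : ℝ) : gen ω (E 1 1) = E 2 2 := by
  simp only [gen, E, single_mul_single_same, single_mul_single_of_ne, ne_eq, Fin.reduceEq,
    not_false_eq_true, sub_self, smul_zero, zero_sub, add_zero, mul_one]
  module

theorem trace_mul_gen_E_one_one (ω : ℝ) (ρ : Matrix (Fin 3) (Fin 3) ℂ) :
    (ρ * gen ω (E 1 1)).trace = ρ 2 2 := by
  rw [gen_E_one_one, E, trace_mul_single]
  simp

theorem no_faithful_invariant_state_general (ω : ℝ) (ρ : Matrix (Fin 3) (Fin 3) ℂ)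
    (hpos : ρ.PosSemidef)
    (hinv : ∀ x : Matrix (Fin 3) (Fin 3) ℂ, (ρ * gen ω x).trace = 0) :
    ρ *ᵥ (Pi.single (2 : Fin 3) (1 : ℂ)) = 0 ∧ ¬ ρ.PosDef := by
  have hker : ρ *ᵥ Pi.single 2 1 = 0 :=
    hpos.mulVec_single_eq_zero (trace_mul_gen_E_one_one ω ρ ▸ hinv (E 1 1))
  exact ⟨hker, fun hpd => hpd.mulVec_ne_zero (Pi.single_ne_zero_iff.mpr one_ne_zero) hker⟩

theorem no_faithful_invariant_state (ω : ℝ) (hω : ω ≠ 0) (ρ : Matrix (Fin 3) (Fin 3) ℂ)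
    (hpos : ρ.PosSemidef) (htr : ρ.trace = 1)
    (hinv : ∀ x : Matrix (Fin 3) (Fin 3) ℂ, (ρ * gen ω x).trace = 0) :
    ρ *ᵥ (Pi.single (2 : Fin 3) (1 : ℂ)) = 0 ∧ ¬ ρ.PosDef :=
  no_faithful_invariant_state_general ω ρ hpos hinv

end
end

section
/- For x ∈ M₃(ℂ), one has 𝓛(x) = 0 if and only if there exist a, b ∈ ℂ with x = a·E₁₁ + b·(E₂₂ + E₃₃). -/
open Matrix

noncomputable section

/-
Every term of `gen ω` except the jump term `E₃₂xE₂₃ = x₂₂ E₃₃` multiplies each entry of `x` by a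
scalar, so `gen ω x = c ⊙ x + x₂₂ E₃₃` for a fixed coefficient matrix `c`. The off-diagonal
entries of `c` are nonzero (their imaginary part is `±ω` or their real part is `-1/2`), which
forces `x` to be diagonal, and the entry `(3,3)` reads `x₂₂ - x₃₃ = 0`.
-/

def genCoeff (ω : ℝ) : Matrix (Fin 3) (Fin 3) ℂ :=
  !![0, Complex.I * ω, Complex.I * ω - 1 / 2;
    -(Complex.I * ω), 0, -1 / 2;
    -(Complex.I * ω) - 1 / 2, -1 / 2, -1]

theorem gen_eq_hadamard_add (ω : ℝ) (x : Matrix (Fin 3) (Fin 3) ℂ) :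
    gen ω x = genCoeff ω ⊙ x + x 1 1 • E 2 2 := by
  ext i j
  fin_cases i <;> fin_cases j <;>
    simp [gen, genCoeff, E, mul_apply, single_apply, two_smul] <;> ring

theorem genCoeff_ne_zero {ω : ℝ} (hω : ω ≠ 0) {i j : Fin 3} (hij : i ≠ j) :
    genCoeff ω i j ≠ 0 := by
  fin_cases i <;> fin_cases j <;> simp_all [genCoeff, Complex.ext_iff]

theorem gen_apply_of_ne (ω : ℝ) (x : Matrix (Fin 3) (Fin 3) ℂ) {i j : Fin 3} (hij : i ≠ j) :
    gen ω x i j = genCoeff ω i j * x i j := by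
  have hE : E 2 2 i j = 0 := by
    rw [E, single_apply_of_ne]
    rintro ⟨rfl, rfl⟩
    exact hij rfl
  simp [gen_eq_hadamard_add, hE]

theorem gen_apply_two_two (ω : ℝ) (x : Matrix (Fin 3) (Fin 3) ℂ) :
    gen ω x 2 2 = x 1 1 - x 2 2 := by
  simp [gen_eq_hadamard_add, genCoeff, E, neg_add_eq_sub]

theorem kernel_of_generator (ω : ℝ) (hω : ω ≠ 0) (x : Matrix (Fin 3) (Fin 3) ℂ) :
    gen ω x = 0 ↔ ∃ a b : ℂ, x = a • E 0 0 + b • (E 1 1 + E 2 2) := by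
  constructor
  · intro h
    have hoff : ∀ i j, i ≠ j → x i j = 0 := fun i j hij => by
      have := gen_apply_of_ne ω x hij
      rw [h] at this
      exact (mul_eq_zero.mp this.symm).resolve_left (genCoeff_ne_zero hω hij)
    have hdiag : x 2 2 = x 1 1 := by
      have := gen_apply_two_two ω x
      rw [h] at this
      exact (sub_eq_zero.mp this.symm).symm
    refine ⟨x 0 0, x 1 1, ?_⟩
    ext i j
    fin_cases i <;> fin_cases j <;> simp [E, hoff, hdiag]
  · rintro ⟨a, b, rfl⟩
    ext i j
    fin_cases i <;> fin_cases j <;> simp [gen_eq_hadamard_add, genCoeff, E]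

end
end

section
/- The complex linear span of the set {x ∈ M₃(ℂ) : there exists λ ∈ ℝ with 𝓛(x) = (iλ)•x} equals {x ∈ M₃(ℂ) : x₁₃ = x₂₃ = x₃₁ = x₃₂ = 0 and x₃₃ = x₂₂}, i.e. it equals the span of E₁₁, E₁₂, E₂₁ and E₂₂ + E₃₃. -/
open Matrix

noncomputable section

/-!
`𝓛` acts entrywise as multiplication by `rate ω i j`, except that the entry `(3,3)` also
receives `x₂₂`. Every off-block entry (`i = 3` or `j = 3`, but not both) has a rate with
negative real part, so it cannot carry a purely imaginary eigenvalue; and the difference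
`x₃₃ - x₂₂` is itself scaled by `-1`, so it vanishes as well. Conversely `E₁₁`, `E₁₂`, `E₂₁`
and `E₂₂ + E₃₃` are eigenvectors with eigenvalues `0`, `iω`, `-iω` and `0`.
-/

open Complex

def rate (ω : ℝ) (i j : Fin 3) : ℂ :=
  I * ω * ((if i = 0 then 1 else 0) - (if j = 0 then 1 else 0))
    - ((if i = 2 then 1 else 0) + (if j = 2 then 1 else 0)) / 2

lemma re_rate (ω : ℝ) (i j : Fin 3) :
    (rate ω i j).re = -((if i = 2 then 1 else 0) + (if j = 2 then 1 else 0)) / 2 := by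
  unfold rate
  split_ifs <;> norm_num

lemma gen_apply (ω : ℝ) (x : Matrix (Fin 3) (Fin 3) ℂ) (i j : Fin 3) :
    gen ω x i j = rate ω i j * x i j + if i = 2 ∧ j = 2 then x 1 1 else 0 := by
  fin_cases i <;> fin_cases j <;>
    simp [gen, rate, E, two_smul, Matrix.mul_apply, Matrix.single] <;> ring

lemma eq_zero_of_mul_eq_I_mul {c z : ℂ} {lam : ℝ} (hc : c.re ≠ 0)
    (h : c * z = I * lam * z) : z = 0 := by
  have hne : c - I * lam ≠ 0 := fun h0 => hc (by simpa using congrArg re h0)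
  exact (mul_eq_zero.mp (by linear_combination h : (c - I * lam) * z = 0)).resolve_left hne

def imagEigenvectors (ω : ℝ) : Set (Matrix (Fin 3) (Fin 3) ℂ) :=
  {x | ∃ lam : ℝ, gen ω x = (I * (lam : ℂ)) • x}

def blockSubmodule : Submodule ℂ (Matrix (Fin 3) (Fin 3) ℂ) where
  carrier := {x | x 0 2 = 0 ∧ x 1 2 = 0 ∧ x 2 0 = 0 ∧ x 2 1 = 0 ∧ x 2 2 = x 1 1}
  add_mem' := by intros; simp_all
  zero_mem' := by simp
  smul_mem' := by intros; simp_all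

section Eigenvector

variable {ω lam : ℝ} {x : Matrix (Fin 3) (Fin 3) ℂ}

lemma apply_eq_zero_of_gen_eq (h : gen ω x = (I * (lam : ℂ)) • x) {i j : Fin 3}
    (hij : i = 2 ∨ j = 2) (hne : ¬(i = 2 ∧ j = 2)) : x i j = 0 := by
  have hentry := congrFun₂ h i j
  rw [gen_apply, if_neg hne, add_zero, Matrix.smul_apply, smul_eq_mul] at hentry
  refine eq_zero_of_mul_eq_I_mul ?_ hentry
  rw [re_rate]
  rcases hij with rfl | rfl <;> simp_all

lemma apply_two_two_of_gen_eq (h : gen ω x = (I * (lam : ℂ)) • x) : x 2 2 = x 1 1 := by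
  have h11 := congrFun₂ h 1 1
  have h22 := congrFun₂ h 2 2
  rw [gen_apply, Matrix.smul_apply, smul_eq_mul] at h11 h22
  rw [show rate ω 1 1 = 0 by simp [rate], if_neg (by decide)] at h11
  rw [show rate ω 2 2 = -1 by norm_num [rate], if_pos ⟨rfl, rfl⟩] at h22
  refine sub_eq_zero.mp (eq_zero_of_mul_eq_I_mul (c := -1) (lam := lam) (by simp) ?_)
  linear_combination h22 - h11

lemma mem_blockSubmodule_of_gen_eq (h : gen ω x = (I * (lam : ℂ)) • x) :
    x ∈ blockSubmodule :=
  ⟨apply_eq_zero_of_gen_eq h (by decide) (by decide),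
    apply_eq_zero_of_gen_eq h (by decide) (by decide),
    apply_eq_zero_of_gen_eq h (by decide) (by decide),
    apply_eq_zero_of_gen_eq h (by decide) (by decide),
    apply_two_two_of_gen_eq h⟩

end Eigenvector

lemma eq_sum_of_mem_blockSubmodule {x : Matrix (Fin 3) (Fin 3) ℂ} (hx : x ∈ blockSubmodule) :
    x = x 0 0 • E 0 0 + x 0 1 • E 0 1 + x 1 0 • E 1 0 + x 1 1 • (E 1 1 + E 2 2) := by
  obtain ⟨h02, h12, h20, h21, h22⟩ := hx
  ext i j
  fin_cases i <;> fin_cases j <;> simp [E, Matrix.single, h02, h12, h20, h21, h22]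

lemma blockBasis_subset_imagEigenvectors (ω : ℝ) :
    {E 0 0, E 0 1, E 1 0, E 1 1 + E 2 2} ⊆ imagEigenvectors ω := by
  simp only [Set.insert_subset_iff, Set.singleton_subset_iff]
  refine ⟨⟨0, ?_⟩, ⟨ω, ?_⟩, ⟨-ω, ?_⟩, ⟨0, ?_⟩⟩ <;> ext i j <;>
    fin_cases i <;> fin_cases j <;> simp [gen_apply, rate, E, Matrix.single]

lemma blockSubmodule_le_span_blockBasis :
    blockSubmodule ≤ Submodule.span ℂ {E 0 0, E 0 1, E 1 0, E 1 1 + E 2 2} := by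
  intro x hx
  rw [eq_sum_of_mem_blockSubmodule hx]
  refine add_mem (add_mem (add_mem ?_ ?_) ?_) ?_ <;>
    exact Submodule.smul_mem _ _ (Submodule.subset_span (by simp))

theorem span_of_imaginary_eigenvectors_general (ω : ℝ) :
    Submodule.span ℂ
        {x : Matrix (Fin 3) (Fin 3) ℂ | ∃ lam : ℝ, gen ω x = (Complex.I * (lam : ℂ)) • x} =
      {x : Matrix (Fin 3) (Fin 3) ℂ |
        x 0 2 = 0 ∧ x 1 2 = 0 ∧ x 2 0 = 0 ∧ x 2 1 = 0 ∧ x 2 2 = x 1 1} := by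
  have hspan : Submodule.span ℂ (imagEigenvectors ω) = blockSubmodule :=
    le_antisymm (Submodule.span_le.mpr fun _ ⟨_, h⟩ => mem_blockSubmodule_of_gen_eq h)
      (blockSubmodule_le_span_blockBasis.trans
        (Submodule.span_mono (blockBasis_subset_imagEigenvectors ω)))
  exact congrArg SetLike.coe hspan

theorem span_of_imaginary_eigenvectors (ω : ℝ) (hω : ω ≠ 0) :
    Submodule.span ℂ
        {x : Matrix (Fin 3) (Fin 3) ℂ | ∃ lam : ℝ, gen ω x = (Complex.I * (lam : ℂ)) • x} =
      {x : Matrix (Fin 3) (Fin 3) ℂ |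
        x 0 2 = 0 ∧ x 1 2 = 0 ∧ x 2 0 = 0 ∧ x 2 1 = 0 ∧ x 2 2 = x 1 1} :=
  span_of_imaginary_eigenvectors_general ω
end
end

section
/- Let M_r denote the complex linear span of {x ∈ M₃(ℂ) : there exists λ ∈ ℝ with 𝓛(x) = (iλ)•x}. Then E₁₂ ∈ M_r and E₂₁ ∈ M_r but the product E₂₁·E₁₂ = E₂₂ does not belong to M_r; in particular M_r is not closed under matrix multiplication, and M_r strictly contains the span of E₁₁ and E₂₂ + E₃₃. -/
open Matrix

noncomputable section

/-- `M_r`: the span of the eigenvectors of `𝓛` with purely imaginary eigenvalue. -/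
def Mr (ω : ℝ) : Submodule ℂ (Matrix (Fin 3) (Fin 3) ℂ) :=
  Submodule.span ℂ
    {x : Matrix (Fin 3) (Fin 3) ℂ | ∃ lam : ℝ, gen ω x = (Complex.I * (lam : ℂ)) • x}

/-!
The populations `x₂₂` and `x₃₃` evolve by `(𝓛x)₂₂ = 0` and `(𝓛x)₃₃ = x₂₂ − x₃₃`, so the population gap
`φ(x) = x₂₂ − x₃₃` satisfies `φ ∘ 𝓛 = −φ`. Since `−1` is not purely imaginary, `φ` vanishes on every
eigenvector spanning `M_r`, hence on `M_r`; but `φ(E₂₂) = 1`, while `E₁₂` and `E₂₁` are eigenvectors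
with eigenvalues `±iω`.
-/

lemma LinearMap.apply_eigenvector_eq_zero_of_ne {K V : Type*} [Field K] [AddCommGroup V] [Module K V]
    (φ : V →ₗ[K] K) (L : V → V) {c μ : K} (hφ : ∀ x, φ (L x) = c * φ x) (hμ : μ ≠ c)
    {x : V} (hx : L x = μ • x) : φ x = 0 := by
  have h : μ * φ x = c * φ x := by rw [← hφ, hx, map_smul, smul_eq_mul]
  exact (mul_eq_mul_right_iff.mp h).resolve_left hμ

lemma mem_Mr_of_gen_eq {ω lam : ℝ} {x : Matrix (Fin 3) (Fin 3) ℂ}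
    (h : gen ω x = (Complex.I * (lam : ℂ)) • x) : x ∈ Mr ω :=
  Submodule.subset_span ⟨lam, h⟩

lemma I_mul_ofReal_ne_neg_one (lam : ℝ) : Complex.I * (lam : ℂ) ≠ -1 := by
  intro h
  simpa using congrArg Complex.re h

def populationGap : Matrix (Fin 3) (Fin 3) ℂ →ₗ[ℂ] ℂ :=
  entryLinearMap ℂ ℂ 1 1 - entryLinearMap ℂ ℂ 2 2

lemma populationGap_gen (ω : ℝ) (x : Matrix (Fin 3) (Fin 3) ℂ) :
    populationGap (gen ω x) = -1 * populationGap x := by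
  simp [populationGap, gen, E, two_smul, Matrix.mul_apply, Matrix.single]
  ring

lemma Mr_le_ker_populationGap (ω : ℝ) : Mr ω ≤ LinearMap.ker populationGap := by
  rw [Mr, Submodule.span_le]
  rintro x ⟨lam, h⟩
  exact populationGap.apply_eigenvector_eq_zero_of_ne (gen ω) (populationGap_gen ω)
    (I_mul_ofReal_ne_neg_one lam) h

lemma gen_E01 (ω : ℝ) : gen ω (E 0 1) = (Complex.I * (ω : ℂ)) • E 0 1 := by
  simp [gen, E, Matrix.single_mul_single_same, Matrix.single_mul_single_of_ne]

lemma gen_E10 (ω : ℝ) : gen ω (E 1 0) = (Complex.I * ((-ω : ℝ) : ℂ)) • E 1 0 := by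
  simp [gen, E, Matrix.single_mul_single_same, Matrix.single_mul_single_of_ne]

lemma gen_E00 (ω : ℝ) : gen ω (E 0 0) = (Complex.I * ((0 : ℝ) : ℂ)) • E 0 0 := by
  simp [gen, E, Matrix.single_mul_single_same, Matrix.single_mul_single_of_ne]

lemma gen_E11_add_E22 (ω : ℝ) :
    gen ω (E 1 1 + E 2 2) = (Complex.I * ((0 : ℝ) : ℂ)) • (E 1 1 + E 2 2) := by
  simp [gen, E, mul_add, add_mul, two_smul, Matrix.single_mul_single_same,
    Matrix.single_mul_single_of_ne]

theorem Mr_not_an_algebra_general (ω : ℝ) :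
    E 0 1 ∈ Mr ω ∧ E 1 0 ∈ Mr ω ∧ E 1 0 * E 0 1 = E 1 1 ∧ E 1 1 ∉ Mr ω ∧
      ¬ (∀ a b, a ∈ Mr ω → b ∈ Mr ω → a * b ∈ Mr ω) ∧
      Submodule.span ℂ {E 0 0, E 1 1 + E 2 2} < Mr ω := by
  have hE01 := mem_Mr_of_gen_eq (gen_E01 ω)
  have hE10 := mem_Mr_of_gen_eq (gen_E10 ω)
  have hprod : E 1 0 * E 0 1 = E 1 1 := by simp [E]
  have hE11 : E 1 1 ∉ Mr ω := fun h => by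
    simpa [populationGap, E] using Mr_le_ker_populationGap ω h
  refine ⟨hE01, hE10, hprod, hE11, fun hmul => hE11 (hprod ▸ hmul _ _ hE10 hE01), ?_⟩
  refine lt_of_le_of_ne ?_ fun heq => ?_
  · rw [Submodule.span_le, Set.pair_subset_iff]
    exact ⟨mem_Mr_of_gen_eq (gen_E00 ω), mem_Mr_of_gen_eq (gen_E11_add_E22 ω)⟩
  · obtain ⟨a, b, hab⟩ := Submodule.mem_span_pair.mp (heq ▸ hE01)
    simpa [E] using congrFun (congrFun hab 0) 1

theorem Mr_not_an_algebra (ω : ℝ) (hω : ω ≠ 0) :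
    E 0 1 ∈ Mr ω ∧ E 1 0 ∈ Mr ω ∧ E 1 0 * E 0 1 = E 1 1 ∧ E 1 1 ∉ Mr ω ∧
      ¬ (∀ a b, a ∈ Mr ω → b ∈ Mr ω → a * b ∈ Mr ω) ∧
      Submodule.span ℂ {E 0 0, E 1 1 + E 2 2} < Mr ω :=
  Mr_not_an_algebra_general ω

end
end

section
/- Let X be a complex Banach space, 𝓛 : X → X a continuous linear map, φ : X → ℂ a continuous linear functional, and λ ∈ ℝ such that φ(𝓛 y) = (iλ)·φ(y) for all y ∈ X. If x ∈ X satisfies exp(t•𝓛)(x) → 0 as t → +∞ (limit along real t in the norm topology), then φ(x) = 0. -/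
/-!
The functional `φ` intertwines `L` with multiplication by `iλ`, hence termwise in the exponential
series it intertwines `exp (t • L)` with multiplication by `exp (iλt)`, a number of modulus one.
So `‖φ (exp (t • L) x)‖ = ‖φ x‖` for all `t`, and this constant tends to `0`.
-/

open Filter

namespace ContinuousLinearMap

variable {𝕂 E F : Type*} [RCLike 𝕂] [NormedAddCommGroup E] [NormedSpace 𝕂 E]
  [NormedAddCommGroup F] [NormedSpace 𝕂 F]

theorem comp_pow_eq_smul_of_comp_eq_smul {φ : E →L[𝕂] F} {L : E →L[𝕂] E} {μ : 𝕂}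
    (h : φ.comp L = μ • φ) (n : ℕ) : φ.comp (L ^ n) = μ ^ n • φ := by
  induction n with
  | zero => simp only [pow_zero, one_def, comp_id, one_smul]
  | succ n ih => rw [pow_succ, mul_def, ← comp_assoc, ih, smul_comp, h, smul_smul, pow_succ]

theorem comp_exp_eq_smul_of_comp_eq_smul [CompleteSpace E] {φ : E →L[𝕂] F} {L : E →L[𝕂] E}
    {μ : 𝕂} (h : φ.comp L = μ • φ) : φ.comp (NormedSpace.exp L) = NormedSpace.exp μ • φ := by
  have hL := (NormedSpace.exp_series_hasSum_exp' (𝕂 := 𝕂) L).mapL (compL 𝕂 E E F φ)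
  have hμ := (NormedSpace.exp_series_hasSum_exp' (𝕂 := 𝕂) μ).smul_const φ
  refine hL.unique ?_
  convert hμ using 2 with n
  simp [comp_pow_eq_smul_of_comp_eq_smul h, smul_smul]

end ContinuousLinearMap

/-- An eigenfunctional of the generator with purely imaginary eigenvalue annihilates every
element whose orbit under the semigroup `exp(t𝓛)` tends to `0`. -/
theorem eigenfunctional_vanishes_on_stable {X : Type*} [NormedAddCommGroup X]
    [NormedSpace ℂ X] [CompleteSpace X]
    (L : X →L[ℂ] X) (φ : X →L[ℂ] ℂ) (lam : ℝ)
    (hφ : ∀ y : X, φ (L y) = (Complex.I * (lam : ℂ)) * φ y)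
    (x : X)
    (hx : Tendsto (fun t : ℝ => (NormedSpace.exp (t • L)) x) atTop (nhds 0)) :
    φ x = 0 := by
  have h_orbit (t : ℝ) :
      φ (NormedSpace.exp (t • L) x) = Complex.exp ((t * lam : ℝ) * Complex.I) * φ x := by
    have h_comp : φ.comp (t • L) = ((t * lam : ℝ) * Complex.I) • φ := by
      ext y
      simp only [ContinuousLinearMap.comp_smul, smul_apply,
        ContinuousLinearMap.comp_apply, hφ, Complex.real_smul, Complex.ofReal_mul, smul_eq_mul]
      ring
    rw [← ContinuousLinearMap.comp_apply,
      ContinuousLinearMap.comp_exp_eq_smul_of_comp_eq_smul h_comp, Complex.exp_eq_exp_ℂ,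
      smul_apply, smul_eq_mul]
  have h_norm := ((φ.continuous.tendsto 0).comp hx).norm
  simp only [Function.comp_def, h_orbit, norm_mul, Complex.norm_exp_ofReal_mul_I, one_mul,
    map_zero, norm_zero, tendsto_const_nhds_iff] at h_norm
  exact norm_eq_zero.mp h_norm
end

section
/- Let u, v ∈ ℂⁿ with K·u = κ•u and K·v = κ'•v for real numbers κ, κ'. Then the matrix η = (u vᴴ) ⊗ₖ τ (Kronecker product of the rank-one matrix u vᴴ with τ) satisfies Trace(η·𝓛(A)) = (i(κ' − κ))·Trace(η·A) for every A ∈ Matrix (Fin n × Fin m) (Fin n × Fin m) ℂ; i.e., η is a dual eigenvector of 𝓛 with purely imaginary eigenvalue i(κ' − κ). -/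
open Matrix
open scoped Kronecker ComplexOrder

/-!
Write `η = u vᴴ`. The eigenvector equations give `K η = κ η` and `η K = κ' η`, so
`Tr(η · i[K, x]) = i(κ' − κ) Tr(η x)`, while `Tr(τ 𝓛ᵐ(y)) = 0` kills the second summand of
`𝓛(x ⊗ y)`. Hence the identity holds on elementary tensors, and both sides are linear in `A`.
-/

namespace Matrix

variable {l m n p : Type*} [Fintype l] [Fintype m] [Fintype n] [Fintype p]

theorem linearMap_ext_kronecker {R M : Type*} [CommSemiring R] [AddCommMonoid M] [Module R M]
    [DecidableEq l] [DecidableEq m] [DecidableEq n] [DecidableEq p]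
    {f g : Matrix (l × n) (m × p) R →ₗ[R] M} (h : ∀ x y, f (x ⊗ₖ y) = g (x ⊗ₖ y)) :
    f = g :=
  (LinearEquiv.eq_comp_toLinearMap_iff (e₁₂ := kroneckerLinearEquiv l m n p R) f g).mp
    (TensorProduct.ext' h)

theorem IsHermitian.star_vecMul_eq_smul_of_mulVec_eq_smul {𝕜 : Type*} [RCLike 𝕜]
    {K : Matrix n n 𝕜} (hK : K.IsHermitian) {v : n → 𝕜} {r : ℝ}
    (hv : K *ᵥ v = (r : 𝕜) • v) : star v ᵥ* K = (r : 𝕜) • star v := by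
  rw [← hK.eq, ← star_mulVec, hv, star_smul, RCLike.star_def, RCLike.conj_ofReal]

theorem trace_mul_commutator_of_mul_eq_smul {R : Type*} [CommRing R] {η K : Matrix n n R}
    {a b : R} (hηK : η * K = a • η) (hKη : K * η = b • η) (x : Matrix n n R) :
    (η * (K * x - x * K)).trace = (a - b) * (η * x).trace := by
  rw [Matrix.mul_sub, trace_sub, ← Matrix.mul_assoc, hηK, ← Matrix.mul_assoc, trace_mul_cycle,
    hKη, smul_mul, smul_mul, trace_smul, trace_smul, smul_eq_mul, smul_eq_mul, sub_mul]

theorem trace_kronecker_mul_apply_of_mul_eq_smul {R : Type*} [CommRing R]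
    [DecidableEq n] [DecidableEq m] {K : Matrix n n R} {Lm : Matrix m m R →ₗ[R] Matrix m m R}
    {τ : Matrix m m R} (hτ : ∀ y, (τ * Lm y).trace = 0) {c : R}
    {𝓛 : Matrix (n × m) (n × m) R →ₗ[R] Matrix (n × m) (n × m) R}
    (h𝓛 : ∀ x y, 𝓛 (x ⊗ₖ y) = (c • (K * x - x * K)) ⊗ₖ y + x ⊗ₖ Lm y)
    {η : Matrix n n R} {a b : R} (hηK : η * K = a • η) (hKη : K * η = b • η)
    (A : Matrix (n × m) (n × m) R) :
    ((η ⊗ₖ τ) * 𝓛 A).trace = c * (a - b) * ((η ⊗ₖ τ) * A).trace := by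
  let trMul : Matrix (n × m) (n × m) R →ₗ[R] R :=
    traceLinearMap (n × m) R R ∘ₗ LinearMap.mulLeft R (η ⊗ₖ τ)
  suffices trMul ∘ₗ 𝓛 = (c * (a - b)) • trMul from LinearMap.congr_fun this A
  refine linearMap_ext_kronecker fun x y => ?_
  simp only [trMul, LinearMap.comp_apply, LinearMap.smul_apply, traceLinearMap_apply,
    LinearMap.mulLeft_apply, h𝓛, Matrix.mul_add, trace_add, ← mul_kronecker_mul, trace_kronecker,
    hτ, mul_zero, add_zero, Matrix.mul_smul, trace_smul, smul_eq_mul,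
    trace_mul_commutator_of_mul_eq_smul hηK hKη]
  ring

end Matrix

theorem rank_one_tensor_tau_is_reversible_general
    (n m : ℕ)
    (K : Matrix (Fin n) (Fin n) ℂ) (hK : K.IsHermitian)
    (Lm : Matrix (Fin m) (Fin m) ℂ →ₗ[ℂ] Matrix (Fin m) (Fin m) ℂ)
    (τ : Matrix (Fin m) (Fin m) ℂ)
    (hτinv : ∀ y : Matrix (Fin m) (Fin m) ℂ, (τ * Lm y).trace = 0)
    (𝓛 : Matrix (Fin n × Fin m) (Fin n × Fin m) ℂ →ₗ[ℂ]
      Matrix (Fin n × Fin m) (Fin n × Fin m) ℂ)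
    (h𝓛 : ∀ (x : Matrix (Fin n) (Fin n) ℂ) (y : Matrix (Fin m) (Fin m) ℂ),
      𝓛 (x ⊗ₖ y) = (Complex.I • (K * x - x * K)) ⊗ₖ y + x ⊗ₖ Lm y)
    (u v : Fin n → ℂ) (κ κ' : ℝ)
    (hu : K *ᵥ u = (κ : ℂ) • u) (hv : K *ᵥ v = (κ' : ℂ) • v) :
    ∀ A : Matrix (Fin n × Fin m) (Fin n × Fin m) ℂ,
      ((vecMulVec u (star v) ⊗ₖ τ) * 𝓛 A).trace =
        Complex.I * ((κ' : ℂ) - (κ : ℂ)) * ((vecMulVec u (star v) ⊗ₖ τ) * A).trace := by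
  have hηK : vecMulVec u (star v) * K = (κ' : ℂ) • vecMulVec u (star v) := by
    rw [vecMulVec_mul, hK.star_vecMul_eq_smul_of_mulVec_eq_smul hv]
    exact vecMulVec_smul _ _ _
  have hKη : K * vecMulVec u (star v) = (κ : ℂ) • vecMulVec u (star v) := by
    rw [mul_vecMulVec, hu, smul_vecMulVec]
  exact trace_kronecker_mul_apply_of_mul_eq_smul hτinv h𝓛 hηK hKη

/-- If `u` and `v` are eigenvectors of `K` with real eigenvalues `κ` and `κ'`, then
`(u vᴴ) ⊗ₖ τ` is a dual eigenvector of `𝓛` with purely imaginary eigenvalue `i(κ' − κ)`. -/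
theorem rank_one_tensor_tau_is_reversible
    (n m : ℕ) (hn : 1 ≤ n) (hm : 1 ≤ m)
    (K : Matrix (Fin n) (Fin n) ℂ) (hK : K.IsHermitian)
    (Lm : Matrix (Fin m) (Fin m) ℂ →ₗ[ℂ] Matrix (Fin m) (Fin m) ℂ)
    (τ : Matrix (Fin m) (Fin m) ℂ) (hτ : τ.PosDef) (hτtr : τ.trace = 1)
    (hτinv : ∀ y : Matrix (Fin m) (Fin m) ℂ, (τ * Lm y).trace = 0)
    (𝓛 : Matrix (Fin n × Fin m) (Fin n × Fin m) ℂ →ₗ[ℂ]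
      Matrix (Fin n × Fin m) (Fin n × Fin m) ℂ)
    (h𝓛 : ∀ (x : Matrix (Fin n) (Fin n) ℂ) (y : Matrix (Fin m) (Fin m) ℂ),
      𝓛 (x ⊗ₖ y) = (Complex.I • (K * x - x * K)) ⊗ₖ y + x ⊗ₖ Lm y)
    (u v : Fin n → ℂ) (κ κ' : ℝ)
    (hu : K *ᵥ u = (κ : ℂ) • u) (hv : K *ᵥ v = (κ' : ℂ) • v) :
    ∀ A : Matrix (Fin n × Fin m) (Fin n × Fin m) ℂ,
      ((vecMulVec u (star v) ⊗ₖ τ) * 𝓛 A).trace =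
        Complex.I * ((κ' : ℂ) - (κ : ℂ)) * ((vecMulVec u (star v) ⊗ₖ τ) * A).trace :=
  rank_one_tensor_tau_is_reversible_general n m K hK Lm τ hτinv 𝓛 h𝓛 u v κ κ' hu hv
end
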